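/- arXiv:math/0308101 — 4 statements merged into one kernel-verified Lean document; each statement's English description precedes it below -/
import Mathlib

section
/- Any integer matrix whose columns are 0/1 vectors in which the 1's form a consecutive block (an interval matrix) is totally unimodular: every square submatrix has determinant 0, 1, or −1. -/
open Matrix Finset

private lemma tri_mul {a b : ℤ} (ha : a = 0 ∨ a = 1 ∨ a = -1)
    (hb : b = 0 ∨ b = 1 ∨ b = -1) : a * b = 0 ∨ a * b = 1 ∨ a * b = -1 := by
  rcases ha with rfl | rfl | rfl <;> rcases hb with rfl | rfl | rfl <;> norm_num

/-- Core lemma: a square matrix with entries in `{0,1,-1}` such that each column contains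
at most one `1` and at most one `-1` has determinant `0`, `1` or `-1`. -/
private lemma core_det : ∀ (k : ℕ) (B : Matrix (Fin k) (Fin k) ℤ),
    (∀ i j, B i j = 0 ∨ B i j = 1 ∨ B i j = -1) →
    (∀ (j i₁ i₂ : Fin k), B i₁ j = B i₂ j → B i₁ j ≠ 0 → i₁ = i₂) →
    B.det = 0 ∨ B.det = 1 ∨ B.det = -1 := by
  intro k
  induction k with
  | zero => intro B _ _; simp
  | succ k ih =>
    intro B h1 h2
    by_cases hz : ∀ j, ∑ i, B i j = 0
    · left
      apply Matrix.exists_vecMul_eq_zero_iff.mp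
      refine ⟨fun _ => 1, ?_, ?_⟩
      · intro h
        have := congrFun h 0
        simp at this
      · funext j
        simpa [Matrix.vecMul, dotProduct] using hz j
    · push_neg at hz
      obtain ⟨j, hj⟩ := hz
      have hex : ∃ i, B i j ≠ 0 := by
        by_contra h
        push_neg at h
        exact hj (by simp [h])
      obtain ⟨i₁, hi₁⟩ := hex
      -- it is the unique nonzero entry in column j
      have huniq : ∀ i, i ≠ i₁ → B i j = 0 := by
        intro i₂ hne
        by_contra hi₂
        have hdiff : B i₂ j ≠ B i₁ j := fun h => hne (h2 j i₂ i₁ h hi₂)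
        have hothers : ∀ i₃, i₃ ≠ i₁ → i₃ ≠ i₂ → B i₃ j = 0 := by
          intro i₃ h₃₁ h₃₂
          by_contra hi₃
          rcases h1 i₃ j with h | h | h
          · exact hi₃ h
          · rcases h1 i₁ j with h' | h' | h'
            · exact hi₁ h'
            · exact h₃₁ (h2 j i₃ i₁ (by rw [h, h']) (by rw [h]; norm_num))
            · rcases h1 i₂ j with h'' | h'' | h''
              · exact hi₂ h''
              · exact h₃₂ (h2 j i₃ i₂ (by rw [h, h'']) (by rw [h]; norm_num))
              · exact hdiff (by rw [h', h''])
          · rcases h1 i₁ j with h' | h' | h'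
            · exact hi₁ h'
            · rcases h1 i₂ j with h'' | h'' | h''
              · exact hi₂ h''
              · exact hdiff (by rw [h', h''])
              · exact h₃₂ (h2 j i₃ i₂ (by rw [h, h'']) (by rw [h]; norm_num))
            · exact h₃₁ (h2 j i₃ i₁ (by rw [h, h']) (by rw [h]; norm_num))
        have hsum : ∑ i, B i j = B i₁ j + B i₂ j := by
          have hpt : ∀ i : Fin (k+1), B i j =
              (if i = i₁ then B i₁ j else 0) + (if i = i₂ then B i₂ j else 0) := by
            intro i
            by_cases e1 : i = i₁
            · subst e1
              rw [if_pos rfl, if_neg (fun h => hne h.symm)]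
              ring
            · by_cases e2 : i = i₂
              · subst e2; rw [if_neg e1, if_pos rfl]; ring
              · rw [if_neg e1, if_neg e2, hothers i e1 e2]; ring
          rw [Finset.sum_congr rfl (fun i _ => hpt i), Finset.sum_add_distrib]
          simp
        have hzero : B i₁ j + B i₂ j = 0 := by
          rcases h1 i₁ j with h' | h' | h'
          · exact absurd h' hi₁
          · rcases h1 i₂ j with h'' | h'' | h''
            · exact absurd h'' hi₂
            · exact absurd (h''.trans h'.symm) hdiff
            · rw [h', h'']; ring
          · rcases h1 i₂ j with h'' | h'' | h''
            · exact absurd h'' hi₂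
            · rw [h', h'']; ring
            · exact absurd (h''.trans h'.symm) hdiff
        exact hj (by rw [hsum, hzero])
      -- Laplace expansion along column j
      have hexp := Matrix.det_succ_column B j
      rw [Fintype.sum_eq_single i₁
        (fun i hi => by rw [huniq i hi]; ring)] at hexp
      rw [hexp]
      apply tri_mul
      · apply tri_mul
        · rcases Nat.even_or_odd ((i₁ : ℕ) + (j : ℕ)) with he | ho
          · right; left; exact he.neg_one_pow
          · right; right; exact ho.neg_one_pow
        · exact h1 i₁ j
      · apply ih
        · intro a b; exact h1 _ _
        · intro j' a b hab hnz
          simp only [Matrix.submatrix_apply] at hab hnz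
          exact Fin.succAbove_right_injective
            (h2 (j.succAbove j') (i₁.succAbove a) (i₁.succAbove b) hab hnz)

/-- A square interval matrix (rows already sorted) has determinant `0`, `1` or `-1`. -/
private lemma interval_det (k : ℕ) (M : Matrix (Fin k) (Fin k) ℤ)
    (h01 : ∀ i j, M i j = 0 ∨ M i j = 1)
    (hcons : ∀ (j i₁ i₂ i₃ : Fin k), i₁ ≤ i₂ → i₂ ≤ i₃ →
      M i₁ j = 1 → M i₃ j = 1 → M i₂ j = 1) :
    M.det = 0 ∨ M.det = 1 ∨ M.det = -1 := by
  classical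
  -- `g j` is column `j` extended by `0` beyond the matrix
  set g : Fin k → ℕ → ℤ := fun j t => if h : t < k then M ⟨t, h⟩ j else 0 with hg
  set N : Matrix (Fin k) (Fin k) ℤ := fun i j => g j i - g j (i + 1) with hN
  set T : Matrix (Fin k) (Fin k) ℤ := fun i j => if (i : ℕ) ≤ (j : ℕ) then 1 else 0 with hT
  have hgval : ∀ (j : Fin k) (i : Fin k), g j i = M i j := by
    intro j i
    simp [hg, i.isLt]
  have hMTN : M = T * N := by
    ext i j
    rw [Matrix.mul_apply]
    have hterm : ∀ x : Fin k, T i x * N x j =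
        (fun t => if (i : ℕ) ≤ t then g j t - g j (t + 1) else 0) (x : ℕ) := by
      intro x
      simp only [hT, hN]
      by_cases hix : (i : ℕ) ≤ (x : ℕ)
      · rw [if_pos hix, if_pos hix, one_mul]
      · rw [if_neg hix, if_neg hix, zero_mul]
    rw [Finset.sum_congr rfl (fun x _ => hterm x),
      Fin.sum_univ_eq_sum_range (fun t => if (i : ℕ) ≤ t then g j t - g j (t + 1) else 0) k,
      ← Finset.sum_filter]
    have hfil : (Finset.range k).filter (fun t => (i : ℕ) ≤ t) = Finset.Ico (i : ℕ) k := by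
      ext t
      simp [Finset.mem_filter, Finset.mem_range, Finset.mem_Ico, and_comm]
    rw [hfil, Finset.sum_Ico_eq_sum_range]
    have htel : ∀ t ∈ Finset.range (k - (i : ℕ)),
        g j ((i : ℕ) + t) - g j ((i : ℕ) + t + 1) =
        (fun s => g j ((i : ℕ) + s)) t - (fun s => g j ((i : ℕ) + s)) (t + 1) := by
      intro t _
      simp [Nat.add_assoc]
    rw [Finset.sum_congr rfl htel, Finset.sum_range_sub' (fun s => g j ((i : ℕ) + s))]
    have h1 : (i : ℕ) + (k - (i : ℕ)) = k := by omega
    have h2 : g j k = 0 := by simp [hg]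
    rw [Nat.add_zero, h1, h2, sub_zero, hgval]
  have hdetT : T.det = 1 := by
    have htri : T.BlockTriangular id := by
      intro a b hab
      simp only [hT]
      rw [if_neg (by exact Nat.not_le.mpr hab)]
    rw [Matrix.det_of_upperTriangular htri]
    simp [hT]
  -- `N` satisfies the hypotheses of `core_det`
  have hN1 : ∀ i j, N i j = 0 ∨ N i j = 1 ∨ N i j = -1 := by
    intro i j
    have ha : g j i = 0 ∨ g j i = 1 := by rw [hgval]; exact h01 i j
    have hb : g j ((i : ℕ) + 1) = 0 ∨ g j ((i : ℕ) + 1) = 1 := by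
      simp only [hg]
      split
      · exact h01 _ j
      · left; rfl
    have hrw : N i j = g j i - g j ((i : ℕ) + 1) := rfl
    rw [hrw]
    rcases ha with h | h <;> rcases hb with h' | h' <;> rw [h, h'] <;> norm_num
  -- characterizations of the entries of N
  have hpos : ∀ (i j : Fin k), N i j = 1 →
      M i j = 1 ∧ g j ((i : ℕ) + 1) = 0 := by
    intro i j h
    have ha : g j i = 0 ∨ g j i = 1 := by rw [hgval]; exact h01 i j
    have hb : g j ((i : ℕ) + 1) = 0 ∨ g j ((i : ℕ) + 1) = 1 := by
      simp only [hg]; split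
      · exact h01 _ j
      · left; rfl
    have h' : g j i - g j ((i : ℕ) + 1) = 1 := h
    constructor
    · rw [← hgval j i]
      rcases ha with h'' | h'' <;> rcases hb with h₃ | h₃ <;> rw [h'', h₃] at h' <;>
        first | omega | exact h''
    · rcases ha with h'' | h'' <;> rcases hb with h₃ | h₃ <;> rw [h'', h₃] at h' <;>
        first | omega | exact h₃
  have hneg : ∀ (i j : Fin k), N i j = -1 →
      M i j = 0 ∧ ∃ h : (i : ℕ) + 1 < k, M ⟨(i : ℕ) + 1, h⟩ j = 1 := by
    intro i j h
    have h' : g j i - g j ((i : ℕ) + 1) = -1 := h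
    have ha : g j i = 0 ∨ g j i = 1 := by rw [hgval]; exact h01 i j
    have hlt : (i : ℕ) + 1 < k := by
      by_contra hk
      have : g j ((i : ℕ) + 1) = 0 := by simp [hg, hk]
      rcases ha with h'' | h'' <;> rw [h'', this] at h' <;> omega
    have hb : g j ((i : ℕ) + 1) = M ⟨(i : ℕ) + 1, hlt⟩ j := by simp [hg, hlt]
    have hMb : M ⟨(i : ℕ) + 1, hlt⟩ j = 0 ∨ M ⟨(i : ℕ) + 1, hlt⟩ j = 1 := h01 _ j
    refine ⟨?_, hlt, ?_⟩
    · rw [← hgval j i]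
      rcases ha with h'' | h'' <;> rcases hMb with h₃ | h₃ <;>
        rw [h'', hb, h₃] at h' <;> first | omega | exact h''
    · rcases ha with h'' | h'' <;> rcases hMb with h₃ | h₃ <;>
        rw [h'', hb, h₃] at h' <;> first | omega | exact h₃
  have hN2 : ∀ (j i₁ i₂ : Fin k), N i₁ j = N i₂ j → N i₁ j ≠ 0 → i₁ = i₂ := by
    -- first a directed version
    have key : ∀ (j i₁ i₂ : Fin k), i₁ < i₂ → N i₁ j = N i₂ j → N i₁ j ≠ 0 → False := by
      intro j i₁ i₂ hlt heq hnz
      rcases hN1 i₁ j with h | h | h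
      · exact hnz h
      · -- both equal 1
        obtain ⟨hM1, hg1⟩ := hpos i₁ j h
        obtain ⟨hM2, _⟩ := hpos i₂ j (heq ▸ h)
        have hi1k : (i₁ : ℕ) + 1 < k := by
          have := i₂.isLt
          have := (Fin.lt_def.mp hlt)
          omega
        have hmid : M ⟨(i₁ : ℕ) + 1, hi1k⟩ j = 1 := by
          apply hcons j i₁ ⟨(i₁ : ℕ) + 1, hi1k⟩ i₂
          · simp only [Fin.le_def, Fin.val_mk]; omega
          · simp only [Fin.le_def, Fin.val_mk]; have := Fin.lt_def.mp hlt; omega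
          · exact hM1
          · exact hM2
        have : g j ((i₁ : ℕ) + 1) = 1 := by rw [show g j ((i₁:ℕ)+1) = M ⟨(i₁:ℕ)+1, hi1k⟩ j by simp [hg, hi1k]]; exact hmid
        rw [hg1] at this; omega
      · -- both equal -1
        obtain ⟨hM1, hk1, hMs1⟩ := hneg i₁ j h
        obtain ⟨hM2, hk2, hMs2⟩ := hneg i₂ j (heq ▸ h)
        have hmid : M i₂ j = 1 := by
          apply hcons j ⟨(i₁ : ℕ) + 1, hk1⟩ i₂ ⟨(i₂ : ℕ) + 1, hk2⟩
          · simp only [Fin.le_def, Fin.val_mk]; have := Fin.lt_def.mp hlt; omega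
          · simp only [Fin.le_def, Fin.val_mk]; omega
          · exact hMs1
          · exact hMs2
        rw [hM2] at hmid; omega
    intro j i₁ i₂ heq hnz
    rcases lt_trichotomy i₁ i₂ with h | h | h
    · exact absurd (key j i₁ i₂ h heq hnz) (by simp)
    · exact h
    · exact absurd (key j i₂ i₁ h heq.symm (heq ▸ hnz)) (by simp)
  have := core_det k N hN1 hN2
  rw [hMTN, Matrix.det_mul, hdetT, one_mul]
  exact this

/-- An interval matrix (each column is a 0/1 vector whose 1's occur in consecutive rows)
is totally unimodular: every square submatrix has determinant `0`, `1` or `−1`. -/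
theorem interval_matrix_totally_unimodular (m n : ℕ) (A : Matrix (Fin m) (Fin n) ℤ)
    (h01 : ∀ i j, A i j = 0 ∨ A i j = 1)
    (hconsec : ∀ (j : Fin n) (i₁ i₂ i₃ : Fin m), i₁ ≤ i₂ → i₂ ≤ i₃ →
      A i₁ j = 1 → A i₃ j = 1 → A i₂ j = 1)
    (l : ℕ) (r : Fin l → Fin m) (c : Fin l → Fin n)
    (hr : Function.Injective r) (hc : Function.Injective c) :
    (A.submatrix r c).det = 0 ∨ (A.submatrix r c).det = 1 ∨ (A.submatrix r c).det = -1 := by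
  classical
  set σ : Equiv.Perm (Fin l) := Tuple.sort r with hσ
  have hmono : Monotone (r ∘ σ) := Tuple.monotone_sort r
  set M : Matrix (Fin l) (Fin l) ℤ := A.submatrix (r ∘ σ) c with hM
  have hM01 : ∀ i j, M i j = 0 ∨ M i j = 1 := fun i j => h01 _ _
  have hMcons : ∀ (j i₁ i₂ i₃ : Fin l), i₁ ≤ i₂ → i₂ ≤ i₃ →
      M i₁ j = 1 → M i₃ j = 1 → M i₂ j = 1 := by
    intro j i₁ i₂ i₃ h12 h23 h1 h3
    exact hconsec (c j) _ _ _ (hmono h12) (hmono h23) h1 h3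
  have hdet := interval_det l M hM01 hMcons
  have hMeq : M = (A.submatrix r c).submatrix σ id := by
    ext i j
    simp [hM, Matrix.submatrix_apply]
  rw [hMeq, Matrix.det_permute] at hdet
  rcases Int.units_eq_one_or (Equiv.Perm.sign σ) with h | h <;> rw [h] at hdet <;>
    simp at hdet <;> omega
end

section
/- For partitions λ, μ, ν with at most 3 parts satisfying |λ|+|μ| = |ν| and λ, μ ⊆ ν (i.e., λ_i ≤ ν_i and μ_i ≤ ν_i for all i), the Littlewood-Richardson coefficient c_{λμ}^{ν} equals the number of integers a satisfying all of: max(λ_2+ν_1, λ_1+ν_2, λ_1+λ_3+μ_1, λ_1+λ_2+μ_2, |λ|+μ_1+μ_2−ν_2, ν_1+ν_2−μ_2) ≤ a ≤ min(ν_1+λ_1, λ_1+λ_2+μ_1, |λ|+μ_1+μ_2−ν_3). -/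
/-- A `k`-hive (integral, with nonnegative entries) with boundary determined by the
partitions `lam`, `mu`, `nu` (0-indexed parts), following Knutson-Tao / Fulton.
Entries outside the triangle are set to `0` to pin down the function. -/
def hiveSet (k : ℕ) (lam mu nu : ℕ → ℕ) : Set (ℕ → ℕ → ℤ) :=
  {a | (∀ i j, k < i + j → a i j = 0) ∧
       (∀ i j, i + j ≤ k → 0 ≤ a i j) ∧
       (∀ i j, i + j + 2 ≤ k →
         a i j + a (i+1) (j+1) ≤ a (i+1) j + a i (j+1) ∧
         a (i+2) j + a i (j+1) ≤ a (i+1) j + a (i+1) (j+1) ∧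
         a (i+1) j + a i (j+2) ≤ a i (j+1) + a (i+1) (j+1)) ∧
       (∀ j, j ≤ k → a 0 j = ∑ t ∈ Finset.range j, (lam t : ℤ)) ∧
       (∀ i, i ≤ k → a i 0 = ∑ t ∈ Finset.range i, (nu t : ℤ)) ∧
       (∀ m, m ≤ k → a m (k - m) =
         (∑ t ∈ Finset.range k, (lam t : ℤ)) + ∑ t ∈ Finset.range m, (mu t : ℤ))}

/-- The Littlewood-Richardson coefficient `c_{λμ}^{ν}` for partitions with at most `k`
parts, defined via the hive model as the number of integral `k`-hives. -/
noncomputable def lrCoeff (k : ℕ) (lam mu nu : ℕ → ℕ) : ℕ :=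
  (hiveSet k lam mu nu).ncard

/-- `lam` is a partition with at most `k` (nonzero) parts, 0-indexed. -/
def IsPartitionLen (k : ℕ) (lam : ℕ → ℕ) : Prop :=
  (∀ i, lam (i + 1) ≤ lam i) ∧ (∀ i, k ≤ i → lam i = 0)

/-- The explicit 3-hive with interior entry `x`. -/
def hiveFun (lam mu nu : ℕ → ℕ) (x : ℤ) : ℕ → ℕ → ℤ := fun i j =>
  if i = 0 then
    (if j = 0 then 0 else if j = 1 then (lam 0 : ℤ)
     else if j = 2 then (lam 0 : ℤ) + lam 1
     else if j = 3 then (lam 0 : ℤ) + lam 1 + lam 2 else 0)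
  else if i = 1 then
    (if j = 0 then (nu 0 : ℤ) else if j = 1 then x
     else if j = 2 then (lam 0 : ℤ) + lam 1 + lam 2 + mu 0 else 0)
  else if i = 2 then
    (if j = 0 then (nu 0 : ℤ) + nu 1
     else if j = 1 then (lam 0 : ℤ) + lam 1 + lam 2 + mu 0 + mu 1 else 0)
  else if i = 3 then
    (if j = 0 then (nu 0 : ℤ) + nu 1 + nu 2 else 0)
  else 0

/-- For partitions with at most 3 parts with `|λ|+|μ|=|ν|` and `λ, μ ⊆ ν`, the
Littlewood-Richardson coefficient equals the number of integers `a` with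
`max(λ₂+ν₁, λ₁+ν₂, λ₁+λ₃+μ₁, λ₁+λ₂+μ₂, |λ|+μ₁+μ₂−ν₂, ν₁+ν₂−μ₂) ≤ a ≤
 min(ν₁+λ₁, λ₁+λ₂+μ₁, |λ|+μ₁+μ₂−ν₃)`. -/
theorem lrCoeff_three_parts_interval (lam mu nu : ℕ → ℕ)
    (hlam : IsPartitionLen 3 lam) (hmu : IsPartitionLen 3 mu)
    (hnu : IsPartitionLen 3 nu)
    (hsum : (∑ t ∈ Finset.range 3, lam t) + (∑ t ∈ Finset.range 3, mu t)
      = ∑ t ∈ Finset.range 3, nu t)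
    (hlnu : ∀ i, lam i ≤ nu i) (hmnu : ∀ i, mu i ≤ nu i) :
    lrCoeff 3 lam mu nu =
      (Finset.Icc
        (max (max ((lam 1 : ℤ) + nu 0) ((lam 0 : ℤ) + nu 1))
          (max (max ((lam 0 : ℤ) + lam 2 + mu 0) ((lam 0 : ℤ) + lam 1 + mu 1))
            (max ((lam 0 : ℤ) + lam 1 + lam 2 + mu 0 + mu 1 - nu 1)
              ((nu 0 : ℤ) + nu 1 - mu 1))))
        (min ((nu 0 : ℤ) + lam 0)
          (min ((lam 0 : ℤ) + lam 1 + mu 0)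
            ((lam 0 : ℤ) + lam 1 + lam 2 + mu 0 + mu 1 - nu 2)))).card := by
  have hsum' : lam 0 + lam 1 + lam 2 + (mu 0 + mu 1 + mu 2) = nu 0 + nu 1 + nu 2 := by
    simpa [Finset.sum_range_succ] using hsum
  set lo := (max (max ((lam 1 : ℤ) + nu 0) ((lam 0 : ℤ) + nu 1))
          (max (max ((lam 0 : ℤ) + lam 2 + mu 0) ((lam 0 : ℤ) + lam 1 + mu 1))
            (max ((lam 0 : ℤ) + lam 1 + lam 2 + mu 0 + mu 1 - nu 1)
              ((nu 0 : ℤ) + nu 1 - mu 1)))) with hlo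
  set hi := (min ((nu 0 : ℤ) + lam 0)
          (min ((lam 0 : ℤ) + lam 1 + mu 0)
            ((lam 0 : ℤ) + lam 1 + lam 2 + mu 0 + mu 1 - nu 2))) with hhi
  have key : hiveSet 3 lam mu nu = hiveFun lam mu nu '' (Finset.Icc lo hi : Set ℤ) := by
    ext a
    constructor
    · rintro ⟨h0, hpos, hrh, hL, hN, hM⟩
      have e00 : a 0 0 = 0 := by simpa using hL 0 (by norm_num)
      have e01 : a 0 1 = lam 0 := by simpa using hL 1 (by norm_num)
      have e02 : a 0 2 = (lam 0 : ℤ) + lam 1 := by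
        simpa [Finset.sum_range_succ] using hL 2 (by norm_num)
      have e03 : a 0 3 = (lam 0 : ℤ) + lam 1 + lam 2 := by
        simpa [Finset.sum_range_succ] using hL 3 le_rfl
      have e10 : a 1 0 = nu 0 := by simpa using hN 1 (by norm_num)
      have e20 : a 2 0 = (nu 0 : ℤ) + nu 1 := by
        simpa [Finset.sum_range_succ] using hN 2 (by norm_num)
      have e30 : a 3 0 = (nu 0 : ℤ) + nu 1 + nu 2 := by
        simpa [Finset.sum_range_succ] using hN 3 le_rfl
      have e12 : a 1 2 = (lam 0 : ℤ) + lam 1 + lam 2 + mu 0 := by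
        have := hM 1 (by norm_num)
        simpa [Finset.sum_range_succ] using this
      have e21 : a 2 1 = (lam 0 : ℤ) + lam 1 + lam 2 + mu 0 + mu 1 := by
        have := hM 2 (by norm_num)
        simpa [Finset.sum_range_succ, add_assoc] using this
      refine ⟨a 1 1, ?_, ?_⟩
      · obtain ⟨r1, r2, r3⟩ := hrh 0 0 (by norm_num)
        obtain ⟨s1, s2, s3⟩ := hrh 0 1 (by norm_num)
        obtain ⟨t1, t2, t3⟩ := hrh 1 0 (by norm_num)
        norm_num at r1 r2 r3 s1 s2 s3 t1 t2 t3
        simp only [e00, e01, e02, e03, e10, e20, e30, e12, e21]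
          at r1 r2 r3 s1 s2 s3 t1 t2 t3
        simp only [Finset.coe_Icc, Set.mem_Icc, hlo, hhi, le_max_iff, max_le_iff,
          le_min_iff, min_le_iff]
        refine ⟨⟨⟨by omega, by omega⟩, ⟨by omega, by omega⟩, by omega, by omega⟩,
          by omega, by omega, by omega⟩
      · funext i j
        rcases Nat.lt_or_ge 3 (i + j) with hij | hij
        · rw [h0 i j hij]
          simp only [hiveFun]
          split_ifs <;> first | rfl | omega
        · have hi3 : i ≤ 3 := by omega
          have hj3 : j ≤ 3 := by omega
          interval_cases i <;> interval_cases j <;>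
            simp only [hiveFun] <;> norm_num <;>
            first | rfl | exact e00 | exact e01 | exact e02 | exact e03 |
              exact e10 | exact e20 | exact e30 | exact e12 | exact e21 | omega
    · rintro ⟨x, hx, rfl⟩
      rw [Finset.mem_coe, Finset.mem_Icc] at hx
      obtain ⟨hx1, hx2⟩ := hx
      rw [hlo] at hx1; rw [hhi] at hx2
      simp only [max_le_iff, le_min_iff] at hx1 hx2
      obtain ⟨⟨b1, b2⟩, ⟨b3, b4⟩, b5, b6⟩ := hx1
      obtain ⟨c1, c2, c3⟩ := hx2
      refine ⟨?_, ?_, ?_, ?_, ?_, ?_⟩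
      · intro i j h
        simp only [hiveFun]
        split_ifs <;> first | rfl | omega
      · intro i j h
        have hi3 : i ≤ 3 := by omega
        have hj3 : j ≤ 3 := by omega
        interval_cases i <;> interval_cases j <;> simp only [hiveFun] <;> norm_num <;> omega
      · intro i j h
        have : i + j ≤ 1 := by omega
        have hi1 : i ≤ 1 := by omega
        have hj1 : j ≤ 1 := by omega
        interval_cases i <;> interval_cases j <;> simp only [hiveFun] <;> norm_num <;> omega
      · intro j hj
        interval_cases j <;> simp [hiveFun, Finset.sum_range_succ]
      · intro i hi4
        interval_cases i <;> simp [hiveFun, Finset.sum_range_succ]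
      · intro m hm
        interval_cases m <;> simp [hiveFun, Finset.sum_range_succ, add_assoc] <;> omega
  rw [lrCoeff, key, Set.ncard_image_of_injOn, Set.ncard_coe_finset]
  intro x _ y _ hxy
  have := congrFun (congrFun hxy 1) 1
  simpa [hiveFun] using this
end

section
/- For partitions λ, μ, ν with at most 3 parts, |λ|+|μ|=|ν| and c_{λμ}^{ν} ≥ 1, the stretched coefficient satisfies c_{Nλ, Nμ}^{Nν} = 1 + N(c_{λμ}^{ν} − 1) for every positive integer N. -/
def Lb (lam mu nu : ℕ → ℕ) : ℤ :=
  max (max (max ((nu 1:ℤ) + lam 0) ((nu 0:ℤ) + lam 1))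
           (max ((lam 0:ℤ) + lam 2 + mu 0) ((lam 0:ℤ) + lam 1 + mu 1)))
      (max ((lam 0:ℤ) + lam 1 + lam 2 + mu 0 + mu 1 - nu 1) ((nu 0:ℤ) + nu 1 - mu 1))

def Ub (lam mu nu : ℕ → ℕ) : ℤ :=
  min ((nu 0:ℤ) + lam 0)
      (min ((lam 0:ℤ) + lam 1 + mu 0) ((lam 0:ℤ) + lam 1 + lam 2 + mu 0 + mu 1 - nu 2))

def hiveOf (lam mu nu : ℕ → ℕ) (x : ℤ) : ℕ → ℕ → ℤ := fun i j =>
  match i, j with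
  | 0,0 => 0
  | 0,1 => lam 0
  | 0,2 => (lam 0:ℤ) + lam 1
  | 0,3 => (lam 0:ℤ) + lam 1 + lam 2
  | 1,0 => nu 0
  | 2,0 => (nu 0:ℤ) + nu 1
  | 3,0 => (nu 0:ℤ) + nu 1 + nu 2
  | 1,1 => x
  | 1,2 => (lam 0:ℤ) + lam 1 + lam 2 + mu 0
  | 2,1 => (lam 0:ℤ) + lam 1 + lam 2 + mu 0 + mu 1
  | _,_ => 0

section helpers
variable (lam mu nu : ℕ → ℕ) (x : ℤ)

lemma hOf00 : hiveOf lam mu nu x 0 0 = 0 := rfl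
lemma hOf01 : hiveOf lam mu nu x 0 1 = lam 0 := rfl
lemma hOf02 : hiveOf lam mu nu x 0 2 = (lam 0:ℤ) + lam 1 := rfl
lemma hOf03 : hiveOf lam mu nu x 0 3 = (lam 0:ℤ) + lam 1 + lam 2 := rfl
lemma hOf10 : hiveOf lam mu nu x 1 0 = nu 0 := rfl
lemma hOf20 : hiveOf lam mu nu x 2 0 = (nu 0:ℤ) + nu 1 := rfl
lemma hOf30 : hiveOf lam mu nu x 3 0 = (nu 0:ℤ) + nu 1 + nu 2 := rfl
lemma hOf11 : hiveOf lam mu nu x 1 1 = x := rfl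
lemma hOf12 : hiveOf lam mu nu x 1 2 = (lam 0:ℤ) + lam 1 + lam 2 + mu 0 := rfl
lemma hOf21 : hiveOf lam mu nu x 2 1 = (lam 0:ℤ) + lam 1 + lam 2 + mu 0 + mu 1 := rfl

lemma hOf_out (i j : ℕ) (h : 3 < i + j) : hiveOf lam mu nu x i j = 0 := by
  rcases i with _|_|_|_|i <;> rcases j with _|_|_|_|j <;> first | rfl | omega

end helpers

lemma hiveSet_eq (lam mu nu : ℕ → ℕ)
    (hsum : (∑ t ∈ Finset.range 3, lam t) + (∑ t ∈ Finset.range 3, mu t)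
      = ∑ t ∈ Finset.range 3, nu t) :
    hiveSet 3 lam mu nu
      = hiveOf lam mu nu '' Set.Icc (Lb lam mu nu) (Ub lam mu nu) := by
  ext a
  constructor
  · rintro ⟨h1, h2, h3, h4, h5, h6⟩
    have e00 : a 0 0 = 0 := by simpa using h4 0 (by norm_num)
    have e01 : a 0 1 = lam 0 := by simpa [Finset.sum_range_succ] using h4 1 (by norm_num)
    have e02 : a 0 2 = (lam 0:ℤ) + lam 1 := by
      simpa [Finset.sum_range_succ] using h4 2 (by norm_num)
    have e03 : a 0 3 = (lam 0:ℤ) + lam 1 + lam 2 := by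
      simpa [Finset.sum_range_succ] using h4 3 (by norm_num)
    have e10 : a 1 0 = nu 0 := by simpa [Finset.sum_range_succ] using h5 1 (by norm_num)
    have e20 : a 2 0 = (nu 0:ℤ) + nu 1 := by
      simpa [Finset.sum_range_succ] using h5 2 (by norm_num)
    have e30 : a 3 0 = (nu 0:ℤ) + nu 1 + nu 2 := by
      simpa [Finset.sum_range_succ] using h5 3 (by norm_num)
    have e12 : a 1 2 = (lam 0:ℤ) + lam 1 + lam 2 + mu 0 := by
      simpa [Finset.sum_range_succ, add_assoc] using h6 1 (by norm_num)
    have e21 : a 2 1 = (lam 0:ℤ) + lam 1 + lam 2 + mu 0 + mu 1 := by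
      simpa [Finset.sum_range_succ, add_assoc] using h6 2 (by norm_num)
    obtain ⟨r11, r12, r13⟩ := h3 0 0 (by norm_num)
    obtain ⟨r21, r22, r23⟩ := h3 0 1 (by norm_num)
    obtain ⟨r31, r32, r33⟩ := h3 1 0 (by norm_num)
    simp only [Nat.reduceAdd] at r11 r12 r13 r21 r22 r23 r31 r32 r33
    refine ⟨a 1 1, ⟨?_, ?_⟩, ?_⟩
    · simp only [Lb, max_le_iff]
      refine ⟨⟨⟨?_, ?_⟩, ?_, ?_⟩, ?_, ?_⟩ <;> omega
    · simp only [Ub, le_min_iff]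
      refine ⟨?_, ?_, ?_⟩ <;> omega
    · funext i j
      rcases i with _|_|_|_|i <;> rcases j with _|_|_|_|j <;>
        first
        | rfl
        | exact e00.symm
        | exact e01.symm
        | exact e02.symm
        | exact e03.symm
        | exact e10.symm
        | exact e20.symm
        | exact e30.symm
        | exact e12.symm
        | exact e21.symm
        | exact (h1 _ _ (by omega)).symm
  · rintro ⟨x, ⟨hL, hU⟩, rfl⟩
    simp only [Lb, max_le_iff] at hL
    simp only [Ub, le_min_iff] at hU
    obtain ⟨⟨⟨⟨l1, l2⟩, l3, l4⟩, l5, l6⟩⟩ := And.intro hL trivial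
    obtain ⟨u1, u2, u3⟩ := hU
    refine ⟨fun i j h => hOf_out lam mu nu x i j h, ?_, ?_, ?_, ?_, ?_⟩
    · intro i j h
      rcases i with _|_|_|_|i <;> rcases j with _|_|_|_|j <;>
        first
        | omega
        | (rw [hOf00])
        | (rw [hOf01]; positivity)
        | (rw [hOf02]; positivity)
        | (rw [hOf03]; positivity)
        | (rw [hOf10]; positivity)
        | (rw [hOf20]; positivity)
        | (rw [hOf30]; positivity)
        | (rw [hOf11]; omega)
        | (rw [hOf12]; positivity)
        | (rw [hOf21]; positivity)
    · intro i j h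
      have hi : i ≤ 1 := by omega
      have hj : j ≤ 1 := by omega
      interval_cases i <;> interval_cases j <;>
        simp only [Nat.reduceAdd, hOf00, hOf01, hOf02, hOf03, hOf10, hOf20, hOf30,
          hOf11, hOf12, hOf21] <;>
        refine ⟨by omega, by omega, by omega⟩
    · intro j hj
      interval_cases j <;>
        simp [hOf00, hOf01, hOf02, hOf03, Finset.sum_range_succ]
    · intro i hi
      interval_cases i <;>
        simp [hOf00, hOf10, hOf20, hOf30, Finset.sum_range_succ]
    · intro m hm
      simp only [Finset.sum_range_succ, Finset.sum_range_zero] at hsum ⊢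
      interval_cases m <;>
        simp only [Nat.reduceSub, hOf03, hOf12, hOf21, hOf30,
          Finset.sum_range_succ, Finset.sum_range_zero] <;>
        push_cast <;> omega

lemma hiveOf_inj (lam mu nu : ℕ → ℕ) : Function.Injective (hiveOf lam mu nu) := by
  intro x y h
  have := congrFun (congrFun h 1) 1
  simpa [hiveOf] using this

lemma lrCoeff_eq (lam mu nu : ℕ → ℕ)
    (hsum : (∑ t ∈ Finset.range 3, lam t) + (∑ t ∈ Finset.range 3, mu t)
      = ∑ t ∈ Finset.range 3, nu t) :
    lrCoeff 3 lam mu nu = (Ub lam mu nu + 1 - Lb lam mu nu).toNat := by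
  rw [lrCoeff, hiveSet_eq lam mu nu hsum,
    Set.ncard_image_of_injective _ (hiveOf_inj lam mu nu),
    ← Finset.coe_Icc, Set.ncard_coe_finset, Int.card_Icc]

lemma Lb_smul (lam mu nu : ℕ → ℕ) (N : ℕ) :
    Lb (fun i => N * lam i) (fun i => N * mu i) (fun i => N * nu i)
      = N * Lb lam mu nu := by
  have hN : (0:ℤ) ≤ N := Int.natCast_nonneg N
  simp only [Lb, mul_max_of_nonneg _ _ hN]
  push_cast
  ring_nf

lemma Ub_smul (lam mu nu : ℕ → ℕ) (N : ℕ) :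
    Ub (fun i => N * lam i) (fun i => N * mu i) (fun i => N * nu i)
      = N * Ub lam mu nu := by
  have hN : (0:ℤ) ≤ N := Int.natCast_nonneg N
  simp only [Ub, mul_min_of_nonneg _ _ hN]
  push_cast
  ring_nf

theorem lrCoeff_three_parts_stretch' (lam mu nu : ℕ → ℕ)
    (hsum : (∑ t ∈ Finset.range 3, lam t) + (∑ t ∈ Finset.range 3, mu t)
      = ∑ t ∈ Finset.range 3, nu t)
    (hc : 1 ≤ lrCoeff 3 lam mu nu) (N : ℕ) (hN : 0 < N) :
    lrCoeff 3 (fun i => N * lam i) (fun i => N * mu i) (fun i => N * nu i)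
      = 1 + N * (lrCoeff 3 lam mu nu - 1) := by
  have hsum' : (∑ t ∈ Finset.range 3, N * lam t) + (∑ t ∈ Finset.range 3, N * mu t)
      = ∑ t ∈ Finset.range 3, N * nu t := by
    simp only [← Finset.mul_sum, ← Nat.mul_add, hsum]
  rw [lrCoeff_eq _ _ _ hsum] at hc ⊢
  rw [lrCoeff_eq _ _ _ hsum', Lb_smul, Ub_smul]
  set L := Lb lam mu nu
  set U := Ub lam mu nu
  have hLU : 0 ≤ U - L := by omega
  obtain ⟨m, hm⟩ := Int.eq_ofNat_of_zero_le hLU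
  have hU : U = L + m := by omega
  rw [hU]
  rw [show (N:ℤ) * (L + m) + 1 - N * L = ((N * m + 1 : ℕ) : ℤ) by push_cast; ring]
  rw [show (L + (m:ℤ) + 1 - L) = ((m + 1 : ℕ) : ℤ) by push_cast; ring]
  rw [Int.toNat_natCast, Int.toNat_natCast]
  simp only [Nat.add_sub_cancel]; omega

/-- For partitions with at most 3 parts with `|λ|+|μ|=|ν|` and `c_{λμ}^{ν} ≥ 1`,
the stretched coefficient satisfies `c_{Nλ,Nμ}^{Nν} = 1 + N(c_{λμ}^{ν} − 1)`. -/
theorem lrCoeff_three_parts_stretch (lam mu nu : ℕ → ℕ)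
    (hlam : IsPartitionLen 3 lam) (hmu : IsPartitionLen 3 mu)
    (hnu : IsPartitionLen 3 nu)
    (hsum : (∑ t ∈ Finset.range 3, lam t) + (∑ t ∈ Finset.range 3, mu t)
      = ∑ t ∈ Finset.range 3, nu t)
    (hc : 1 ≤ lrCoeff 3 lam mu nu) (N : ℕ) (hN : 0 < N) :
    lrCoeff 3 (fun i => N * lam i) (fun i => N * mu i) (fun i => N * nu i)
      = 1 + N * (lrCoeff 3 lam mu nu - 1) := by
  exact lrCoeff_three_parts_stretch' lam mu nu hsum hc N hN
end

section
/- Let C ⊆ ℝ^d be a full-dimensional closed convex cone and let H be a finite hyperplane arrangement with hyperplanes {x : ⟨a_i, x⟩ = c_i}. Let H_0 be the centralized arrangement {x : ⟨a_i, x⟩ = 0}. If C has nonempty interior intersection with some open region R̃ of H_0, then for every r > 0 there is a ball of radius r contained in C and in a single open region of H. -/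
/-- Let `C ⊆ ℝ^d` be a closed convex cone whose interior meets an open region of the
centralized arrangement `{x : ⟨aᵢ, x⟩ = 0}` (so `C` is full-dimensional). Then for every
`r > 0` there is a ball of radius `r` contained in `C` and in a single open region of
the affine arrangement `{x : ⟨aᵢ, x⟩ = cᵢ}`. -/
theorem cone_meets_region_large_balls (d m : ℕ)
    (C : Set (EuclideanSpace ℝ (Fin d)))
    (hconv : Convex ℝ C) (hclosed : IsClosed C)
    (hcone : ∀ t : ℝ, 0 ≤ t → ∀ x ∈ C, t • x ∈ C)
    (a : Fin m → EuclideanSpace ℝ (Fin d)) (c : Fin m → ℝ)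
    (ha : ∀ i, a i ≠ 0)
    (hmeet : ∃ x ∈ interior C, ∀ i, (inner ℝ (a i) x : ℝ) ≠ 0) :
    ∀ r : ℝ, 0 < r → ∃ y : EuclideanSpace ℝ (Fin d),
      Metric.ball y r ⊆ C ∧
      ∀ i, (∀ z ∈ Metric.ball y r, (inner ℝ (a i) z : ℝ) < c i) ∨
           (∀ z ∈ Metric.ball y r, c i < (inner ℝ (a i) z : ℝ)) := by
  obtain ⟨x, hxC, hx⟩ := hmeet
  intro r hr
  obtain ⟨ε, hε, hball⟩ := Metric.isOpen_iff.mp isOpen_interior x hxC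
  have hballC : Metric.ball x ε ⊆ C := hball.trans interior_subset
  obtain ⟨M, hM⟩ := Finite.exists_le
    (fun i => (‖a i‖ * r + |c i|) / |(inner ℝ (a i) x : ℝ)|)
  set t : ℝ := max (r / ε) M with htdef
  have ht0 : 0 < t := lt_of_lt_of_le (div_pos hr hε) (le_max_left _ _)
  have hrt : r ≤ t * ε := (div_le_iff₀ hε).mp (le_max_left _ _)
  refine ⟨t • x, ?_, ?_⟩
  · intro z hz
    have hz' : ‖z - t • x‖ < t * ε :=
      lt_of_lt_of_le (by simpa [dist_eq_norm] using hz) hrt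
    have hmem : t⁻¹ • z ∈ Metric.ball x ε := by
      rw [Metric.mem_ball, dist_eq_norm]
      have : t⁻¹ • z - x = t⁻¹ • (z - t • x) := by
        rw [smul_sub, smul_smul, inv_mul_cancel₀ ht0.ne', one_smul]
      rw [this, norm_smul, Real.norm_eq_abs, abs_of_pos (inv_pos.mpr ht0)]
      calc t⁻¹ * ‖z - t • x‖ < t⁻¹ * (t * ε) := by
            exact mul_lt_mul_of_pos_left hz' (inv_pos.mpr ht0)
        _ = ε := by field_simp
    have := hcone t ht0.le _ (hballC hmem)
    rwa [smul_smul, mul_inv_cancel₀ ht0.ne', one_smul] at this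
  · intro i
    set p : ℝ := inner ℝ (a i) x with hpdef
    have hp : p ≠ 0 := hx i
    have hap : 0 < ‖a i‖ := norm_pos_iff.mpr (ha i)
    have htp : ‖a i‖ * r + |c i| ≤ t * |p| := by
      have h1 : (‖a i‖ * r + |c i|) / |p| ≤ t := le_trans (hM i) (le_max_right _ _)
      calc ‖a i‖ * r + |c i| = (‖a i‖ * r + |c i|) / |p| * |p| := by
            field_simp
        _ ≤ t * |p| := mul_le_mul_of_nonneg_right h1 (abs_nonneg _)
    have key : ∀ z ∈ Metric.ball (t • x) r,
        |(inner ℝ (a i) z : ℝ) - t * p| < ‖a i‖ * r := by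
      intro z hz
      have h1 : (inner ℝ (a i) z : ℝ) - t * p = inner ℝ (a i) (z - t • x) := by
        rw [inner_sub_right, real_inner_smul_right]
      rw [h1]
      calc |(inner ℝ (a i) (z - t • x) : ℝ)| ≤ ‖a i‖ * ‖z - t • x‖ :=
            abs_real_inner_le_norm _ _
        _ < ‖a i‖ * r := by
            apply mul_lt_mul_of_pos_left _ hap
            simpa [dist_eq_norm] using hz
    rcases hp.lt_or_gt with hneg | hpos
    · left
      intro z hz
      have h1 := key z hz
      have h2 : t * p + (‖a i‖ * r) ≤ c i := by
        have : t * |p| = -(t * p) := by rw [abs_of_neg hneg]; ring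
        nlinarith [neg_abs_le (c i)]
      have := abs_lt.mp h1
      linarith [this.2]
    · right
      intro z hz
      have h1 := key z hz
      have h2 : c i ≤ t * p - ‖a i‖ * r := by
        have : t * |p| = t * p := by rw [abs_of_pos hpos]
        nlinarith [le_abs_self (c i)]
      have := abs_lt.mp h1
      linarith [this.1]
end
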